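/- Let m, n ≥ 3 be integers, let k = ℚ(cos(2π/m), cos(2π/n), cos(π/m)·cos(π/n)) as a subfield of ℝ, set s = 2cos(π/n), and let G_{m,n} be the subgroup of SL(2,ℝ) generated by A = [[1, 2cos(π/m) + 2cos(π/n)], [0, 1]] and B = [[2cos(π/m), 1], [−1, 0]]. Call M = [[a,b],[c,d]] ∈ SL(2,ℝ) 'odd' if a, d ∈ s·k and b, c ∈ k. Suppose s ∉ k. If H is a subgroup of G_{m,n} that contains a parabolic element and contains an odd element, then H contains an odd hyperbolic element. -/

import Mathlib

open Real Matrix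

/-- `M` is an 'odd' element: diagonal entries in `s·k`, off-diagonal entries in `k`. -/
def IsOddElt (k : Subfield ℝ) (s : ℝ) (M : Matrix (Fin 2) (Fin 2) ℝ) : Prop :=
  (∃ y ∈ k, M 0 0 = s * y) ∧ (∃ y ∈ k, M 1 1 = s * y) ∧ M 0 1 ∈ k ∧ M 1 0 ∈ k

/-- A matrix in SL(2,ℝ) is parabolic if it is not ±I and has trace of absolute value 2. -/
def IsParabolicMat (M : Matrix (Fin 2) (Fin 2) ℝ) : Prop :=
  M ≠ 1 ∧ M ≠ -1 ∧ |Matrix.trace M| = 2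

/-!
Since `s² = 2 cos(2π/n) + 2 ∈ k`, the matrices whose `(i, j)` entry lies in `s^(p+i+j) · k` (for
`p ∈ ℤ/2`) multiply like a `ℤ/2`-graded algebra. The generator `A` has parity `0` and `B` parity
`1`, so every element of `G_{m,n}` has a parity, and parity `1` is exactly oddness. The trace of an
odd element lies in `s · k`, which meets `k` only in `0` because `s ∉ k`; so odd elements are never
parabolic, and the square `U = P²` of the parabolic element (a unipotent) is even.

Given an odd `E ∈ H` with `|tr E| ≤ 2`, in fact `|tr E| < 2`. Writing `U = 1 + Q` with `Q² = 0`,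
`tr (Uʲ E) = tr E + j · tr (Q E)`, and `tr (Q E) ≠ 0` because otherwise `E` would preserve the line
`ker Q` and so have a real eigenvalue. Hence `Uʲ E` is odd and hyperbolic for large `j`.
-/

open Polynomial

section Parity

variable (k : Subfield ℝ) (s : ℝ)

noncomputable def gradedPiece (p : Fin 2) : AddSubgroup ℝ :=
  k.toAddSubgroup.map (AddMonoidHom.mulLeft (s ^ (p : ℕ)))

/-- Indices are added in `Fin 2 = ℤ/2`. Parity `1` is `IsOddElt`, parity `0` the paper's "even". -/
def HasParity (p : Fin 2) (M : Matrix (Fin 2) (Fin 2) ℝ) : Prop :=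
  ∀ i j, M i j ∈ gradedPiece k s (p + i + j)

variable {k s}

lemma mem_gradedPiece {p : Fin 2} {x : ℝ} :
    x ∈ gradedPiece k s p ↔ ∃ y ∈ k, s ^ (p : ℕ) * y = x :=
  AddSubgroup.mem_map

@[simp]
lemma mem_gradedPiece_zero {x : ℝ} : x ∈ gradedPiece k s 0 ↔ x ∈ k := by
  simp [mem_gradedPiece]

lemma mem_gradedPiece_one {x : ℝ} : x ∈ gradedPiece k s 1 ↔ ∃ y ∈ k, x = s * y := by
  simp [mem_gradedPiece, eq_comm]

lemma self_mem_gradedPiece_one : s ∈ gradedPiece k s 1 :=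
  mem_gradedPiece_one.2 ⟨1, one_mem k, (mul_one s).symm⟩

lemma mem_gradedPiece_one_of_mul_mem (hs : s ^ 2 ∈ k) (hs0 : s ≠ 0) {x : ℝ} (hx : x * s ∈ k) :
    x ∈ gradedPiece k s 1 :=
  mem_gradedPiece_one.2 ⟨x * s / s ^ 2, div_mem hx hs, by field_simp⟩

lemma mul_mem_gradedPiece (hs : s ^ 2 ∈ k) {p q : Fin 2} {x y : ℝ}
    (hx : x ∈ gradedPiece k s p) (hy : y ∈ gradedPiece k s q) :
    x * y ∈ gradedPiece k s (p + q) := by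
  obtain ⟨a, ha, rfl⟩ := mem_gradedPiece.1 hx
  obtain ⟨b, hb, rfl⟩ := mem_gradedPiece.1 hy
  refine mem_gradedPiece.2 ⟨(s ^ 2) ^ (((p : ℕ) + q) / 2) * a * b,
    mul_mem (mul_mem (pow_mem hs _) ha) hb, ?_⟩
  rw [Fin.val_add, ← mul_assoc, ← mul_assoc, ← pow_mul, ← pow_add, Nat.mod_add_div]
  ring

lemma eq_zero_of_mem_gradedPiece_one (hsk : s ∉ k) {x : ℝ} (hx : x ∈ gradedPiece k s 1)
    (hxk : x ∈ k) : x = 0 := by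
  obtain ⟨y, hy, rfl⟩ := mem_gradedPiece_one.1 hx
  by_contra h
  exact hsk (by simpa [right_ne_zero_of_mul h] using div_mem hxk hy)

lemma hasParity_one_iff {M : Matrix (Fin 2) (Fin 2) ℝ} : HasParity k s 1 M ↔ IsOddElt k s M := by
  simp only [HasParity, IsOddElt, Fin.forall_fin_two, Fin.isValue, add_zero, Fin.reduceAdd,
    mem_gradedPiece_one, mem_gradedPiece_zero]
  tauto

lemma hasParity_zero_one : HasParity k s 0 1 := by
  intro i j
  fin_cases i <;> fin_cases j <;> simp

lemma HasParity.mul (hs : s ^ 2 ∈ k) {p q : Fin 2} {M N : Matrix (Fin 2) (Fin 2) ℝ}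
    (hM : HasParity k s p M) (hN : HasParity k s q N) : HasParity k s (p + q) (M * N) := by
  intro i j
  rw [mul_apply]
  refine sum_mem fun l _ => ?_
  have : p + i + l + (q + l + j) = p + q + i + j := by grind
  exact this ▸ mul_mem_gradedPiece hs (hM i l) (hN l j)

lemma HasParity.pow (hs : s ^ 2 ∈ k) {p : Fin 2} {M : Matrix (Fin 2) (Fin 2) ℝ}
    (hM : HasParity k s p M) (n : ℕ) : HasParity k s (n • p) (M ^ n) := by
  induction n with
  | zero => simpa using hasParity_zero_one
  | succ n ih => simpa [pow_succ, succ_nsmul] using ih.mul hs hM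

lemma HasParity.inv {p : Fin 2} {g : SpecialLinearGroup (Fin 2) ℝ}
    (hg : HasParity k s p g) : HasParity k s p ↑g⁻¹ := by
  rw [SpecialLinearGroup.SL2_inv_expl]
  intro i j
  fin_cases i <;> fin_cases j
  · simpa [add_assoc] using hg 1 1
  · simpa using neg_mem (hg 0 1)
  · simpa using neg_mem (hg 1 0)
  · simpa [add_assoc] using hg 0 0

lemma HasParity.trace_mem {p : Fin 2} {M : Matrix (Fin 2) (Fin 2) ℝ}
    (hM : HasParity k s p M) : M.trace ∈ gradedPiece k s p := by
  rw [trace_fin_two]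
  exact add_mem (by simpa using hM 0 0) (by simpa [add_assoc] using hM 1 1)

lemma HasParity.abs_trace_ne_two (hsk : s ∉ k) {M : Matrix (Fin 2) (Fin 2) ℝ}
    (hM : HasParity k s 1 M) : |M.trace| ≠ 2 := by
  intro h
  have htk : M.trace ∈ k := by
    rcases abs_eq zero_le_two |>.1 h with h | h <;> rw [h]
    exacts [ofNat_mem k 2, neg_mem (ofNat_mem k 2)]
  simp [eq_zero_of_mem_gradedPiece_one hsk hM.trace_mem htk] at h

lemma HasParity.eq_zero_of_abs_trace_eq_two (hsk : s ∉ k) {p : Fin 2}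
    {M : Matrix (Fin 2) (Fin 2) ℝ} (hM : HasParity k s p M) (h : |M.trace| = 2) : p = 0 := by
  fin_cases p
  · rfl
  · exact absurd h (hM.abs_trace_ne_two hsk)

variable (k s) in
def paritySubgroup (hs : s ^ 2 ∈ k) : Subgroup (SpecialLinearGroup (Fin 2) ℝ) where
  carrier := {g : SpecialLinearGroup (Fin 2) ℝ | ∃ p, HasParity k s p g}
  mul_mem' := fun ⟨p, hp⟩ ⟨q, hq⟩ => ⟨p + q, by simpa using hp.mul hs hq⟩
  one_mem' := ⟨0, by simpa using hasParity_zero_one⟩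
  inv_mem' := fun ⟨p, hp⟩ => ⟨p, hp.inv⟩

lemma mem_paritySubgroup {hs : s ^ 2 ∈ k} {g : SpecialLinearGroup (Fin 2) ℝ} :
    g ∈ paritySubgroup k s hs ↔ ∃ p, HasParity k s p g :=
  Iff.rfl

end Parity

lemma sq_eq_trace_smul_sub_det {R : Type*} [CommRing R] [Nontrivial R]
    (M : Matrix (Fin 2) (Fin 2) R) :
    M ^ 2 = M.trace • M - M.det • 1 := by
  have h := aeval_self_charpoly M
  simp only [charpoly_fin_two, map_add, map_sub, map_pow, aeval_X, map_mul, aeval_C,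
    Algebra.algebraMap_eq_smul_one, smul_mul_assoc, one_mul] at h
  rw [← sub_eq_zero, ← h]
  abel

lemma IsParabolicMat.sq_sub_one_sq_eq_zero {M : Matrix (Fin 2) (Fin 2) ℝ} (hdet : M.det = 1)
    (hM : IsParabolicMat M) : (M ^ 2 - 1) ^ 2 = 0 := by
  have htr : M.trace ^ 2 = 4 := by rw [← sq_abs, hM.2.2]; norm_num
  have h : ((X : ℝ[X]) ^ 2 - 1) ^ 2
      = M.charpoly * (X ^ 2 + C M.trace * X + 1) + C (M.trace ^ 2 - 4) * X ^ 2 := by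
    rw [charpoly_fin_two, hdet, C_1, map_sub, map_pow, map_ofNat]
    ring
  simpa [htr, aeval_self_charpoly] using congrArg (aeval M) h

lemma IsParabolicMat.sq_ne_one {M : Matrix (Fin 2) (Fin 2) ℝ} (hdet : M.det = 1)
    (hM : IsParabolicMat M) : M ^ 2 ≠ 1 := by
  obtain ⟨h1, h2, htr⟩ := hM
  intro h
  rw [sq_eq_trace_smul_sub_det, hdet, one_smul, sub_eq_iff_eq_add] at h
  rcases abs_eq zero_le_two |>.1 htr with ht | ht <;> rw [ht] at h
  · exact h1 (smul_right_injective _ two_ne_zero (h.trans (two_smul ℝ 1).symm))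
  · refine h2 (smul_right_injective _ (neg_ne_zero.2 two_ne_zero) (h.trans ?_))
    show (1 + 1 : Matrix (Fin 2) (Fin 2) ℝ) = (-2 : ℝ) • (-1)
    rw [smul_neg, neg_smul, neg_neg, two_smul]

lemma trace_eq_two_of_sq_sub_one_sq_eq_zero {U : Matrix (Fin 2) (Fin 2) ℝ}
    (hU : (U - 1) ^ 2 = 0) : U.trace = 2 := by
  have := (isNilpotent_trace_of_isNilpotent ⟨2, hU⟩).eq_zero
  rw [trace_sub, trace_one, Fintype.card_fin, sub_eq_zero] at this
  exact_mod_cast this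

lemma one_add_pow_of_mul_self_eq_zero {R : Type*} [Ring R] {x : R} (hx : x * x = 0) (n : ℕ) :
    (1 + x) ^ n = 1 + n • x := by
  induction n with
  | zero => simp
  | succ n ih =>
    rw [pow_succ, ih, add_mul, one_mul, mul_add, mul_one, smul_mul_assoc, hx, smul_zero,
      succ_nsmul]
    abel

lemma trace_mul_ne_zero_of_sq_eq_zero {Q E : Matrix (Fin 2) (Fin 2) ℝ} (hQ : Q ^ 2 = 0)
    (hQ0 : Q ≠ 0) (hE : E.det = 1) (hEt : E.trace ^ 2 < 4) : (Q * E).trace ≠ 0 := by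
  intro hx
  have htQ := (isNilpotent_trace_of_isNilpotent ⟨2, hQ⟩).eq_zero
  have hdQ : Q.det = 0 := pow_eq_zero_iff two_ne_zero |>.1 (by simp [← det_pow, hQ])
  simp only [trace_fin_two, det_fin_two, mul_apply, Fin.sum_univ_two] at htQ hdQ hE hEt hx
  have hd : Q 1 1 = -Q 0 0 := by linarith
  rw [hd] at hx hdQ
  -- `Q = λ v (J v)ᵀ` with `v` spanning `ker Q`, so `tr (Q E) = λ F v` for a quadratic form `F` of
  -- discriminant `tr² E - 4`, definite for elliptic `E`. In coordinates:
  have key : (2 * E 1 0 * Q 0 1 + (E 0 0 - E 1 1) * Q 0 0) ^ 2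
      + (4 - (E 0 0 + E 1 1) ^ 2) * Q 0 0 ^ 2 = 0 := by
    linear_combination 4 * E 1 0 * Q 0 1 * hx - 4 * Q 0 0 ^ 2 * hE + 4 * E 0 1 * E 1 0 * hdQ
  have ha : Q 0 0 ^ 2 ≤ 0 := by
    nlinarith [sq_nonneg (2 * E 1 0 * Q 0 1 + (E 0 0 - E 1 1) * Q 0 0)]
  replace ha : Q 0 0 = 0 := pow_eq_zero_iff two_ne_zero |>.1 (le_antisymm ha (sq_nonneg _))
  rw [ha] at hx hdQ hd
  have he : E 0 1 * E 1 0 = 0 := by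
    rcases mul_eq_zero.1 (neg_eq_zero.1 (by linear_combination hdQ) : Q 0 1 * Q 1 0 = 0)
      with hb | hc
    · have hc : Q 1 0 ≠ 0 := fun hc => hQ0 (by ext i j; fin_cases i <;> fin_cases j <;> simp [*])
      simp [hb, hc] at hx
      simp [hx]
    · have hb : Q 0 1 ≠ 0 := fun hb => hQ0 (by ext i j; fin_cases i <;> fin_cases j <;> simp [*])
      simp [hb, hc] at hx
      simp [hx]
  nlinarith [sq_nonneg (E 0 0 - E 1 1)]

lemma exists_two_lt_abs_trace_pow_mul {U E : Matrix (Fin 2) (Fin 2) ℝ} (hU : (U - 1) ^ 2 = 0)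
    (hU1 : U ≠ 1) (hE : E.det = 1) (hEt : |E.trace| < 2) : ∃ j : ℕ, 2 < |(U ^ j * E).trace| := by
  set c := ((U - 1) * E).trace
  have hc : c ≠ 0 :=
    trace_mul_ne_zero_of_sq_eq_zero hU (sub_ne_zero.2 hU1) hE (by nlinarith [abs_lt.1 hEt])
  have htr (j : ℕ) : (U ^ j * E).trace = E.trace + j * c := by
    rw [← add_sub_cancel 1 U, one_add_pow_of_mul_self_eq_zero (by rwa [← sq]),
      add_mul, one_mul, trace_add, smul_mul_assoc, trace_smul, nsmul_eq_mul]
  obtain ⟨j, hj⟩ := exists_nat_gt ((2 + |E.trace|) / |c|)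
  refine ⟨j, ?_⟩
  rw [div_lt_iff₀ (abs_pos.2 hc)] at hj
  calc 2 < |(j : ℝ) * c| - |-E.trace| := by rw [abs_mul, Nat.abs_cast, abs_neg]; linarith
    _ ≤ |E.trace + j * c| := by simpa [add_comm] using abs_sub_abs_le_abs_sub (j * c) (-E.trace)
    _ = |(U ^ j * E).trace| := by rw [htr]

lemma exists_odd_two_lt_abs_trace {k : Subfield ℝ} {s : ℝ} {hs : s ^ 2 ∈ k} (hsk : s ∉ k)
    {H : Subgroup (SpecialLinearGroup (Fin 2) ℝ)} (hH : H ≤ paritySubgroup k s hs)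
    (hpar : ∃ P ∈ H, IsParabolicMat (P : Matrix (Fin 2) (Fin 2) ℝ))
    (hodd : ∃ E ∈ H, IsOddElt k s (E : Matrix (Fin 2) (Fin 2) ℝ)) :
    ∃ N ∈ H, IsOddElt k s (N : Matrix (Fin 2) (Fin 2) ℝ) ∧
      2 < |(N : Matrix (Fin 2) (Fin 2) ℝ).trace| := by
  obtain ⟨E, hEH, hE⟩ := hodd
  by_cases hEbig : 2 < |(E : Matrix (Fin 2) (Fin 2) ℝ).trace|
  · exact ⟨E, hEH, hE, hEbig⟩
  rw [← hasParity_one_iff] at hE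
  obtain ⟨P, hPH, hP⟩ := hpar
  have hU := hP.sq_sub_one_sq_eq_zero P.2
  obtain ⟨j, hj⟩ := exists_two_lt_abs_trace_pow_mul hU (hP.sq_ne_one P.2) E.2
    (lt_of_le_of_ne (not_lt.1 hEbig) (hE.abs_trace_ne_two hsk))
  obtain ⟨p, hp⟩ := mem_paritySubgroup.1 (hH (pow_mem hPH 2))
  replace hp : HasParity k s p ((P : Matrix (Fin 2) (Fin 2) ℝ) ^ 2) := by simpa using hp
  obtain rfl : p = 0 := hp.eq_zero_of_abs_trace_eq_two hsk
    (by rw [trace_eq_two_of_sq_sub_one_sq_eq_zero hU, abs_two])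
  refine ⟨(P ^ 2) ^ j * E, mul_mem (pow_mem (pow_mem hPH 2) j) hEH, ?_, by simpa using hj⟩
  rw [← hasParity_one_iff]
  simpa using (hp.pow hs j).mul hs hE

theorem stmt10_general (m n : ℕ)
    (A B : Matrix.SpecialLinearGroup (Fin 2) ℝ)
    (hA : (A : Matrix (Fin 2) (Fin 2) ℝ) =
      !![1, 2 * Real.cos (Real.pi / (m : ℝ)) + 2 * Real.cos (Real.pi / (n : ℝ)); 0, 1])
    (hB : (B : Matrix (Fin 2) (Fin 2) ℝ) =
      !![2 * Real.cos (Real.pi / (m : ℝ)), 1; -1, 0])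
    (k : Subfield ℝ)
    (hk : k = Subfield.closure ({Real.cos (2 * Real.pi / (m : ℝ)),
      Real.cos (2 * Real.pi / (n : ℝ)),
      Real.cos (Real.pi / (m : ℝ)) * Real.cos (Real.pi / (n : ℝ))} : Set ℝ))
    (s : ℝ) (hs : s = 2 * Real.cos (Real.pi / (n : ℝ)))
    (hsk : s ∉ k)
    (H : Subgroup (Matrix.SpecialLinearGroup (Fin 2) ℝ))
    (hHG : H ≤ Subgroup.closure ({A, B} : Set (Matrix.SpecialLinearGroup (Fin 2) ℝ)))
    (hpar : ∃ P ∈ H, IsParabolicMat (P : Matrix (Fin 2) (Fin 2) ℝ))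
    (hodd : ∃ E ∈ H, IsOddElt k s (E : Matrix (Fin 2) (Fin 2) ℝ)) :
    ∃ N ∈ H, IsOddElt k s (N : Matrix (Fin 2) (Fin 2) ℝ) ∧
      2 < |Matrix.trace ((N : Matrix (Fin 2) (Fin 2) ℝ))| := by
  have hs0 : s ≠ 0 := fun h => hsk (h ▸ zero_mem k)
  have hk_mem {x : ℝ} (hx : x ∈ ({cos (2 * π / m), cos (2 * π / n),
      cos (π / m) * cos (π / n)} : Set ℝ)) : x ∈ k := hk ▸ Subfield.subset_closure hx
  have hs2 : s ^ 2 ∈ k := by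
    rw [show s ^ 2 = 2 * cos (2 * π / n) + 2 by rw [hs, mul_div_assoc, cos_two_mul]; ring]
    exact add_mem (mul_mem (ofNat_mem k 2) (hk_mem (by simp))) (ofNat_mem k 2)
  have hcm : 2 * cos (π / m) ∈ gradedPiece k s 1 := by
    refine mem_gradedPiece_one_of_mul_mem hs2 hs0 ?_
    rw [hs, show 2 * cos (π / m) * (2 * cos (π / n)) = 4 * (cos (π / m) * cos (π / n)) by ring]
    exact mul_mem (ofNat_mem k 4) (hk_mem (by simp))
  have hG : Subgroup.closure {A, B} ≤ paritySubgroup k s hs2 := by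
    rw [Subgroup.closure_le, Set.insert_subset_iff, Set.singleton_subset_iff]
    refine ⟨⟨0, ?_⟩, ⟨1, ?_⟩⟩ <;> intro i j <;> fin_cases i <;> fin_cases j <;> simp [hA, hB, hcm]
    exact add_mem hcm (hs ▸ self_mem_gradedPiece_one)
  exact exists_odd_two_lt_abs_trace hsk (hHG.trans hG) hpar hodd

theorem stmt10 (m n : ℕ) (hm : 3 ≤ m) (hn : 3 ≤ n)
    (A B : Matrix.SpecialLinearGroup (Fin 2) ℝ)
    (hA : (A : Matrix (Fin 2) (Fin 2) ℝ) =
      !![1, 2 * Real.cos (Real.pi / (m : ℝ)) + 2 * Real.cos (Real.pi / (n : ℝ)); 0, 1])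
    (hB : (B : Matrix (Fin 2) (Fin 2) ℝ) =
      !![2 * Real.cos (Real.pi / (m : ℝ)), 1; -1, 0])
    (k : Subfield ℝ)
    (hk : k = Subfield.closure ({Real.cos (2 * Real.pi / (m : ℝ)),
      Real.cos (2 * Real.pi / (n : ℝ)),
      Real.cos (Real.pi / (m : ℝ)) * Real.cos (Real.pi / (n : ℝ))} : Set ℝ))
    (s : ℝ) (hs : s = 2 * Real.cos (Real.pi / (n : ℝ)))
    (hsk : s ∉ k)
    (H : Subgroup (Matrix.SpecialLinearGroup (Fin 2) ℝ))
    (hHG : H ≤ Subgroup.closure ({A, B} : Set (Matrix.SpecialLinearGroup (Fin 2) ℝ)))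
    (hpar : ∃ P ∈ H, IsParabolicMat (P : Matrix (Fin 2) (Fin 2) ℝ))
    (hodd : ∃ E ∈ H, IsOddElt k s (E : Matrix (Fin 2) (Fin 2) ℝ)) :
    ∃ N ∈ H, IsOddElt k s (N : Matrix (Fin 2) (Fin 2) ℝ) ∧
      2 < |Matrix.trace ((N : Matrix (Fin 2) (Fin 2) ℝ))| :=
  stmt10_general m n A B hA hB k hk s hs hsk H hHG hpar hodd
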